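/- (Ruane) Let X be a proper CAT(0) space on which some group acts geometrically, and let γ be a hyperbolic isometry belonging to that group. Then ∂Min(γ) equals the fixed-point set of the induced action of γ on ∂X: ∂Min(γ) = {α ∈ ∂X : γα = α}. -/
import Mathlib


open Metric Filter

section Preamble

variable {X : Type*} [MetricSpace X]

/-- `f : ℝ → X` is a geodesic segment from `x` to `y`, parametrized by arclength
on `[0, dist x y]`. -/
def IsGeodesicSegment (f : ℝ → X) (x y : X) : Prop :=
  f 0 = x ∧ f (dist x y) = y ∧
    ∀ s t : ℝ, s ∈ Set.Icc 0 (dist x y) → t ∈ Set.Icc 0 (dist x y) →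
      dist (f s) (f t) = |s - t|

/-- `f : ℝ → X` is a geodesic ray (an isometric embedding of `[0,∞)`). -/
def IsGeodesicRay (f : ℝ → X) : Prop :=
  ∀ s t : ℝ, 0 ≤ s → 0 ≤ t → dist (f s) (f t) = |s - t|

/-- `f : ℝ → X` is a geodesic line (an isometric embedding of `ℝ`). -/
def IsGeodesicLine (f : ℝ → X) : Prop :=
  ∀ s t : ℝ, dist (f s) (f t) = |s - t|

/-- The image of a geodesic ray, i.e. the image of `[0,∞)`. -/
def rayImage (f : ℝ → X) : Set X := f '' Set.Ici (0 : ℝ)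

/-- A subset `C` is (geodesically) convex: every geodesic segment between
points of `C` stays in `C`. -/
def MetricConvex (C : Set X) : Prop :=
  ∀ x ∈ C, ∀ y ∈ C, ∀ f : ℝ → X, IsGeodesicSegment f x y →
    ∀ t ∈ Set.Icc (0 : ℝ) (dist x y), f t ∈ C

/-- A geodesic metric space: any two points are joined by a geodesic segment. -/
def GeodesicSpace (X : Type*) [MetricSpace X] : Prop :=
  ∀ x y : X, ∃ f : ℝ → X, IsGeodesicSegment f x y

/-- CAT(0): a geodesic space satisfying the CN (Bruhat–Tits) comparison inequality,
which for complete geodesic spaces is equivalent to the CAT(0) comparison condition. -/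
def IsCAT0 (X : Type*) [MetricSpace X] : Prop :=
  GeodesicSpace X ∧
    ∀ x y z m : X, dist x m = dist x y / 2 → dist m y = dist x y / 2 →
      dist z m ^ 2 ≤ (dist z x ^ 2 + dist z y ^ 2) / 2 - dist x y ^ 2 / 4

/-- Two geodesic rays are asymptotic if they stay at bounded distance. -/
def Asymptotic (f g : ℝ → X) : Prop :=
  ∃ C : ℝ, ∀ t : ℝ, 0 ≤ t → dist (f t) (g t) ≤ C

/-- The fixed-point set of an isometry. -/
def fixedSet (r : X ≃ᵢ X) : Set X := {x | r x = x}

/-- `r` is a reflection of `X` with halfspaces `Xp`, `Xm`: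
an involutive isometry such that `X ∖ F_r` has exactly the two convex connected
components `Xp` and `Xm`, interchanged by `r`. -/
structure IsReflection (r : X ≃ᵢ X) (Xp Xm : Set X) : Prop where
  invol : ∀ x : X, r (r x) = x
  disj : Disjoint Xp Xm
  union : Xp ∪ Xm = (fixedSet r)ᶜ
  conn_p : IsConnected Xp
  conn_m : IsConnected Xm
  convex_p : MetricConvex Xp
  convex_m : MetricConvex Xm
  swap : r '' Xp = Xm

/-- The translation length of an isometry. -/
noncomputable def translationLength (γ : X ≃ᵢ X) : ℝ := ⨅ x : X, dist x (γ x)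

/-- The minimal set of an isometry. -/
def minSet (γ : X ≃ᵢ X) : Set X := {x | dist x (γ x) = translationLength γ}

/-- `γ` is hyperbolic: its translation length is positive and attained. -/
def IsHyperbolicIsometry (γ : X ≃ᵢ X) : Prop :=
  (minSet γ).Nonempty ∧ 0 < translationLength γ

/-- `X` is almost extendible with constant `M`. -/
def AlmostExtendibleWith (X : Type*) [MetricSpace X] (M : ℝ) : Prop :=
  ∀ x y : X, ∃ f : ℝ → X, IsGeodesicRay f ∧ f 0 = x ∧ ∃ t : ℝ, 0 ≤ t ∧ dist (f t) y ≤ M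

/-- `X` is almost extendible. -/
def AlmostExtendible (X : Type*) [MetricSpace X] : Prop :=
  ∃ M : ℝ, 0 < M ∧ AlmostExtendibleWith X M

/-- The boundary of `X` with respect to the basepoint `x₀`: geodesic rays issuing
from `x₀`, topologized as a subspace of `ℝ → X` with the topology of pointwise
convergence (which, for this equicontinuous family in a proper space, is the cone
topology). -/
def Boundary (X : Type*) [MetricSpace X] (x₀ : X) : Type _ :=
  {f : ℝ → X // IsGeodesicRay f ∧ f 0 = x₀}

noncomputable instance (x₀ : X) : TopologicalSpace (Boundary X x₀) :=
  inferInstanceAs (TopologicalSpace {f : ℝ → X // IsGeodesicRay f ∧ f 0 = x₀})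

/-- The boundary `∂C ⊆ ∂X` of a subset `C ⊆ X`: boundary points represented by rays
asymptotic to a geodesic ray contained in `C`. -/
def bdryOf (x₀ : X) (C : Set X) : Set (Boundary X x₀) :=
  {ξ | ∃ g : ℝ → X, IsGeodesicRay g ∧ rayImage g ⊆ C ∧ Asymptotic ξ.1 g}

/-- `f` is the geodesic from `x₀` to `x`, extended to `[0,∞)` by the constant `x`. -/
def IsGeodesicToPt (x₀ x : X) (f : ℝ → X) : Prop :=
  f 0 = x₀ ∧ f (dist x₀ x) = x ∧
    (∀ s t : ℝ, s ∈ Set.Icc 0 (dist x₀ x) → t ∈ Set.Icc 0 (dist x₀ x) →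
      dist (f s) (f t) = |s - t|) ∧
    ∀ t : ℝ, dist x₀ x ≤ t → f t = x

/-- A point of the compactification `X ∪ ∂X`, encoded as either an (extended)
geodesic from `x₀` to a point of `X`, or a geodesic ray from `x₀`. -/
def ConePt (x₀ : X) (f : ℝ → X) : Prop :=
  (∃ x : X, IsGeodesicToPt x₀ x f) ∨ (IsGeodesicRay f ∧ f 0 = x₀)

/-- The compactification `X ∪ ∂X` of a proper CAT(0) space with basepoint `x₀`,
with the topology of pointwise convergence of the (extended) geodesics from `x₀`
(the cone topology). -/
def ConeCpt (X : Type*) [MetricSpace X] (x₀ : X) : Type _ := {f : ℝ → X // ConePt x₀ f}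

noncomputable instance (x₀ : X) : TopologicalSpace (ConeCpt X x₀) :=
  inferInstanceAs (TopologicalSpace {f : ℝ → X // ConePt x₀ f})

/-- The neighborhood `U'_{x₀}(α; R, ε)` in `X ∪ ∂X`: points `x` with
`d(x₀,x) > R` and `d(α(R), Im ξ_x) < ε`. -/
def Uprime (x₀ : X) (α : ℝ → X) (R ε : ℝ) : Set (ConeCpt X x₀) :=
  {f | (∃ t : ℝ, 0 ≤ t ∧ R < dist x₀ (f.1 t)) ∧ infDist (α R) (rayImage f.1) < ε}

end Preamble
section CATHelpers

variable {X : Type*} [MetricSpace X]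

private lemma le_of_sq_le_sq'' {a b : ℝ} (ha : 0 ≤ a) (hb : 0 ≤ b) (h : a ^ 2 ≤ b ^ 2) :
    a ≤ b := by nlinarith

lemma seg_dist_from_start {f : ℝ → X} {x y : X} (hf : IsGeodesicSegment f x y)
    {t : ℝ} (ht : t ∈ Set.Icc (0:ℝ) (dist x y)) : dist x (f t) = t := by
  have h := hf.2.2 0 t ⟨le_rfl, dist_nonneg⟩ ht
  rw [hf.1] at h
  rw [h, zero_sub, abs_neg, abs_of_nonneg ht.1]

lemma seg_trunc {f : ℝ → X} {x y : X} (hf : IsGeodesicSegment f x y)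
    {T : ℝ} (hT : T ∈ Set.Icc (0:ℝ) (dist x y)) : IsGeodesicSegment f x (f T) := by
  have e : dist x (f T) = T := seg_dist_from_start hf hT
  refine ⟨hf.1, by rw [e], ?_⟩
  intro a b ha hb
  rw [e] at ha hb
  exact hf.2.2 a b ⟨ha.1, ha.2.trans hT.2⟩ ⟨hb.1, hb.2.trans hT.2⟩

lemma seg_reverse {f : ℝ → X} {x y : X} (hf : IsGeodesicSegment f x y) :
    IsGeodesicSegment (fun s => f (dist x y - s)) y x := by
  obtain ⟨h0, h1, hi⟩ := hf
  have hc : dist y x = dist x y := dist_comm y x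
  refine ⟨by simpa using h1, ?_, ?_⟩
  · rw [hc]
    show f (dist x y - dist x y) = x
    rw [sub_self]; exact h0
  · intro a b ha hb
    rw [hc] at ha hb
    show dist (f (dist x y - a)) (f (dist x y - b)) = |a - b|
    rw [hi (dist x y - a) (dist x y - b) ⟨by linarith [ha.2], by linarith [ha.1]⟩
      ⟨by linarith [hb.2], by linarith [hb.1]⟩,
      show dist x y - a - (dist x y - b) = b - a by ring, abs_sub_comm]

lemma ray_restrict {h : ℝ → X} (hr : IsGeodesicRay h) {s T : ℝ} (hs : 0 ≤ s) (hsT : s ≤ T) :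
    IsGeodesicSegment (fun r => h (s + r)) (h s) (h T) := by
  have hT : 0 ≤ T := hs.trans hsT
  have e : dist (h s) (h T) = T - s := by
    rw [hr s T hs hT, abs_sub_comm, abs_of_nonneg (by linarith)]
  refine ⟨by simp, ?_, ?_⟩
  · rw [e]
    show h (s + (T - s)) = h T
    congr 1; ring
  · intro a b ha hb
    rw [e] at ha hb
    show dist (h (s + a)) (h (s + b)) = |a - b|
    rw [hr (s + a) (s + b) (by linarith [ha.1]) (by linarith [hb.1]),
      show s + a - (s + b) = a - b by ring]

lemma ray_seg {α : ℝ → X} (hr : IsGeodesicRay α) {S : ℝ} (hS : 0 ≤ S) :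
    IsGeodesicSegment α (α 0) (α S) := by
  have e : dist (α 0) (α S) = S := by
    rw [hr 0 S le_rfl hS, zero_sub, abs_neg, abs_of_nonneg hS]
  refine ⟨rfl, by rw [e], ?_⟩
  intro a b ha hb
  rw [e] at ha hb
  exact hr a b ha.1 hb.1

/-- The CAT(0) comparison inequality along a geodesic, in multiplied-through form. -/
lemma comparison_sq
    (hCN : ∀ x y z m : X, dist x m = dist x y / 2 → dist m y = dist x y / 2 →
      dist z m ^ 2 ≤ (dist z x ^ 2 + dist z y ^ 2) / 2 - dist x y ^ 2 / 4)
    {f : ℝ → X} {x y : X} (hf : IsGeodesicSegment f x y) (z : X)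
    {t : ℝ} (ht : t ∈ Set.Icc (0:ℝ) (dist x y)) :
    dist z (f t) ^ 2 * dist x y ≤
      (dist x y - t) * dist z x ^ 2 + t * dist z y ^ 2 - t * (dist x y - t) * dist x y := by
  obtain ⟨hf0, hfc, hfi⟩ := hf
  have hc0 : (0:ℝ) ≤ dist x y := dist_nonneg
  have P0 : dist z (f 0) ^ 2 * dist x y ≤
      (dist x y - 0) * dist z x ^ 2 + 0 * dist z y ^ 2 - 0 * (dist x y - 0) * dist x y := by
    rw [hf0]; exact le_of_eq (by ring)
  have Pc : dist z (f (dist x y)) ^ 2 * dist x y ≤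
      (dist x y - dist x y) * dist z x ^ 2 + dist x y * dist z y ^ 2 -
        dist x y * (dist x y - dist x y) * dist x y := by
    rw [hfc]; exact le_of_eq (by ring)
  have mid : ∀ t1 t2 : ℝ, t1 ∈ Set.Icc (0:ℝ) (dist x y) → t2 ∈ Set.Icc (0:ℝ) (dist x y) →
      dist z (f t1) ^ 2 * dist x y ≤
        (dist x y - t1) * dist z x ^ 2 + t1 * dist z y ^ 2 - t1 * (dist x y - t1) * dist x y →
      dist z (f t2) ^ 2 * dist x y ≤
        (dist x y - t2) * dist z x ^ 2 + t2 * dist z y ^ 2 - t2 * (dist x y - t2) * dist x y →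
      dist z (f ((t1 + t2) / 2)) ^ 2 * dist x y ≤
        (dist x y - (t1 + t2) / 2) * dist z x ^ 2 + ((t1 + t2) / 2) * dist z y ^ 2 -
          ((t1 + t2) / 2) * (dist x y - (t1 + t2) / 2) * dist x y := by
    intro t1 t2 h1m h2m h1 h2
    have hm : (t1 + t2) / 2 ∈ Set.Icc (0:ℝ) (dist x y) :=
      ⟨by linarith [h1m.1, h2m.1], by linarith [h1m.2, h2m.2]⟩
    have e12 : dist (f t1) (f t2) = |t1 - t2| := hfi t1 t2 h1m h2m
    have e1m : dist (f t1) (f ((t1 + t2) / 2)) = |t1 - t2| / 2 := by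
      rw [hfi t1 ((t1 + t2) / 2) h1m hm,
        show t1 - (t1 + t2) / 2 = (t1 - t2) / 2 by ring, abs_div]
      norm_num
    have e2m : dist (f ((t1 + t2) / 2)) (f t2) = |t1 - t2| / 2 := by
      rw [hfi ((t1 + t2) / 2) t2 hm h2m,
        show (t1 + t2) / 2 - t2 = (t1 - t2) / 2 by ring, abs_div]
      norm_num
    have hcn := hCN (f t1) (f t2) z (f ((t1 + t2) / 2)) (by rw [e1m, e12]) (by rw [e2m, e12])
    rw [e12, sq_abs] at hcn
    nlinarith [mul_le_mul_of_nonneg_right hcn hc0, h1, h2]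
  have hmem : ∀ n k : ℕ, k ≤ 2 ^ n →
      ((k : ℝ) * dist x y / 2 ^ n) ∈ Set.Icc (0:ℝ) (dist x y) := by
    intro n k hk
    constructor
    · positivity
    · rw [div_le_iff₀ (by positivity : (0:ℝ) < 2 ^ n)]
      have hk' : (k : ℝ) ≤ 2 ^ n := by exact_mod_cast hk
      nlinarith
  have dyad : ∀ n k : ℕ, k ≤ 2 ^ n →
      dist z (f ((k : ℝ) * dist x y / 2 ^ n)) ^ 2 * dist x y ≤
        (dist x y - (k : ℝ) * dist x y / 2 ^ n) * dist z x ^ 2 +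
          ((k : ℝ) * dist x y / 2 ^ n) * dist z y ^ 2 -
          ((k : ℝ) * dist x y / 2 ^ n) * (dist x y - (k : ℝ) * dist x y / 2 ^ n) * dist x y := by
    intro n
    induction n with
    | zero =>
      intro k hk
      interval_cases k
      · simpa using P0
      · simpa using Pc
    | succ n ih =>
      intro k hk
      have h2 : (2:ℕ) ^ (n + 1) = 2 ^ n + 2 ^ n := by rw [pow_succ]; ring
      rcases Nat.even_or_odd k with ⟨j, hj⟩ | ⟨j, hj⟩
      · have hj' : j ≤ 2 ^ n := by omega
        have harg : (k : ℝ) * dist x y / 2 ^ (n + 1) = (j : ℝ) * dist x y / 2 ^ n := by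
          subst hj; push_cast; rw [pow_succ]; field_simp; ring
        rw [harg]; exact ih j hj'
      · have hj1 : j ≤ 2 ^ n := by omega
        have hj2 : j + 1 ≤ 2 ^ n := by omega
        have harg : (k : ℝ) * dist x y / 2 ^ (n + 1) =
            (((j : ℕ) : ℝ) * dist x y / 2 ^ n + (((j + 1 : ℕ) : ℝ)) * dist x y / 2 ^ n) / 2 := by
          subst hj; push_cast; rw [pow_succ]; field_simp; ring
        rw [harg]
        exact mid _ _ (hmem n j hj1) (hmem n (j + 1) hj2) (ih j hj1) (ih (j + 1) hj2)
  rcases eq_or_lt_of_le hc0 with hc | hc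
  · have ht0 : t = 0 := le_antisymm (hc ▸ ht.2) ht.1
    subst ht0
    rw [← hc]
    norm_num
  · set k : ℕ → ℕ := fun n => ⌊t * 2 ^ n / dist x y⌋₊ with hkdef
    have hkle : ∀ n, k n ≤ 2 ^ n := by
      intro n
      have h1 : t * 2 ^ n / dist x y ≤ (((2:ℕ) ^ n : ℕ) : ℝ) := by
        rw [div_le_iff₀ hc]
        push_cast
        nlinarith [ht.2, pow_pos (by norm_num : (0:ℝ) < 2) n]
      calc k n ≤ ⌊(((2:ℕ) ^ n : ℕ) : ℝ)⌋₊ := Nat.floor_mono h1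
        _ = 2 ^ n := Nat.floor_natCast _
    have hx0 : ∀ n : ℕ, 0 ≤ t * 2 ^ n / dist x y := by
      intro n
      have := ht.1
      positivity
    have hlow : ∀ n, ((k n : ℝ) * dist x y / 2 ^ n) ≤ t := by
      intro n
      have h3 := Nat.floor_le (hx0 n)
      rw [le_div_iff₀ hc] at h3
      rw [div_le_iff₀ (by positivity : (0:ℝ) < 2 ^ n)]
      linarith
    have hhigh : ∀ n, t < ((k n : ℝ) + 1) * dist x y / 2 ^ n := by
      intro n
      have h4 := Nat.lt_floor_add_one (t * 2 ^ n / dist x y)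
      rw [div_lt_iff₀ hc] at h4
      rw [lt_div_iff₀ (by positivity : (0:ℝ) < 2 ^ n)]
      linarith
    have htend : Filter.Tendsto (fun n : ℕ => (k n : ℝ) * dist x y / 2 ^ n)
        Filter.atTop (nhds t) := by
      apply tendsto_of_tendsto_of_tendsto_of_le_of_le
        (g := fun n : ℕ => t - dist x y / 2 ^ n) (h := fun _ : ℕ => t)
      · have h0 : Filter.Tendsto (fun n : ℕ => dist x y / 2 ^ n) Filter.atTop (nhds 0) := by
          have hhalf := tendsto_pow_atTop_nhds_zero_of_lt_one
            (by norm_num : (0:ℝ) ≤ 1/2) (by norm_num : (1/2:ℝ) < 1)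
          have heq : ∀ n : ℕ, dist x y / 2 ^ n = dist x y * (1/2) ^ n := by
            intro n
            rw [one_div, inv_pow, div_eq_mul_inv]
          exact (by simpa using (hhalf.const_mul (dist x y)) :
            Filter.Tendsto (fun n : ℕ => dist x y * (1/2) ^ n) Filter.atTop (nhds 0)).congr
            fun n => (heq n).symm
        have := (tendsto_const_nhds :
          Filter.Tendsto (fun _ : ℕ => t) Filter.atTop (nhds t)).sub h0
        simpa using this
      · exact tendsto_const_nhds
      · intro n
        have h5 := hhigh n
        have h6 : ((k n : ℝ) + 1) * dist x y / 2 ^ n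
            = (k n : ℝ) * dist x y / 2 ^ n + dist x y / 2 ^ n := by ring
        linarith
      · intro n; exact hlow n
    have hfts : Filter.Tendsto (fun n : ℕ => f ((k n : ℝ) * dist x y / 2 ^ n))
        Filter.atTop (nhds (f t)) := by
      rw [tendsto_iff_dist_tendsto_zero]
      have heq : ∀ n : ℕ, dist (f ((k n : ℝ) * dist x y / 2 ^ n)) (f t)
          = |(k n : ℝ) * dist x y / 2 ^ n - t| := fun n =>
        hfi _ _ (hmem n (k n) (hkle n)) ht
      have h3 : Filter.Tendsto (fun n : ℕ => |(k n : ℝ) * dist x y / 2 ^ n - t|)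
          Filter.atTop (nhds 0) := by
        have := (htend.sub (tendsto_const_nhds : Filter.Tendsto (fun _ : ℕ => t) Filter.atTop (nhds t))).abs
        simpa using this
      exact h3.congr fun n => (heq n).symm
    have hL : Filter.Tendsto
        (fun n : ℕ => dist z (f ((k n : ℝ) * dist x y / 2 ^ n)) ^ 2 * dist x y)
        Filter.atTop (nhds (dist z (f t) ^ 2 * dist x y)) := by
      have h1 : Filter.Tendsto (fun n : ℕ => dist z (f ((k n : ℝ) * dist x y / 2 ^ n)))
          Filter.atTop (nhds (dist z (f t))) := tendsto_const_nhds.dist hfts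
      exact (h1.pow 2).mul_const _
    have hR : Filter.Tendsto (fun n : ℕ =>
        (dist x y - (k n : ℝ) * dist x y / 2 ^ n) * dist z x ^ 2 +
          ((k n : ℝ) * dist x y / 2 ^ n) * dist z y ^ 2 -
          ((k n : ℝ) * dist x y / 2 ^ n) * (dist x y - (k n : ℝ) * dist x y / 2 ^ n) * dist x y)
        Filter.atTop (nhds ((dist x y - t) * dist z x ^ 2 + t * dist z y ^ 2 -
          t * (dist x y - t) * dist x y)) := by
      have hcont : Continuous (fun s : ℝ =>
          (dist x y - s) * dist z x ^ 2 + s * dist z y ^ 2 - s * (dist x y - s) * dist x y) := by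
        fun_prop
      exact (hcont.tendsto t).comp htend
    exact le_of_tendsto_of_tendsto' hL hR (fun n => dyad n (k n) (hkle n))

end CATHelpers
section CATHelpers2

variable {X : Type*} [MetricSpace X]

lemma comparison_norm
    (hCN : ∀ x y z m : X, dist x m = dist x y / 2 → dist m y = dist x y / 2 →
      dist z m ^ 2 ≤ (dist z x ^ 2 + dist z y ^ 2) / 2 - dist x y ^ 2 / 4)
    {f : ℝ → X} {x y : X} (hf : IsGeodesicSegment f x y) (hc : 0 < dist x y) (z : X)
    {l : ℝ} (hl0 : 0 ≤ l) (hl1 : l ≤ 1) :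
    dist z (f (l * dist x y)) ^ 2 ≤
      (1 - l) * dist z x ^ 2 + l * dist z y ^ 2 - l * (1 - l) * dist x y ^ 2 := by
  have hmem : l * dist x y ∈ Set.Icc (0:ℝ) (dist x y) :=
    ⟨mul_nonneg hl0 dist_nonneg, by nlinarith [dist_nonneg (x := x) (y := y)]⟩
  have h := comparison_sq hCN hf z hmem
  refine le_trans ((le_div_iff₀ hc).mpr h) (le_of_eq ?_)
  field_simp

lemma same_start
    (hCN : ∀ x y z m : X, dist x m = dist x y / 2 → dist m y = dist x y / 2 →
      dist z m ^ 2 ≤ (dist z x ^ 2 + dist z y ^ 2) / 2 - dist x y ^ 2 / 4)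
    {f g : ℝ → X} {x y y' : X}
    (hf : IsGeodesicSegment f x y) (hg : IsGeodesicSegment g x y')
    {l : ℝ} (hl0 : 0 ≤ l) (hl1 : l ≤ 1) :
    dist (f (l * dist x y)) (g (l * dist x y')) ≤ l * dist y y' := by
  have hmemf : l * dist x y ∈ Set.Icc (0:ℝ) (dist x y) :=
    ⟨mul_nonneg hl0 dist_nonneg, by nlinarith [dist_nonneg (x := x) (y := y)]⟩
  have hmemg : l * dist x y' ∈ Set.Icc (0:ℝ) (dist x y') :=
    ⟨mul_nonneg hl0 dist_nonneg, by nlinarith [dist_nonneg (x := x) (y := y')]⟩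
  rcases eq_or_lt_of_le (dist_nonneg : (0:ℝ) ≤ dist x y) with hc | hc
  · have hxy : x = y := eq_of_dist_eq_zero hc.symm
    have e0 : l * dist x y = 0 := by rw [← hc, mul_zero]
    rw [e0, hf.1, seg_dist_from_start hg hmemg, hxy]
  rcases eq_or_lt_of_le (dist_nonneg : (0:ℝ) ≤ dist x y') with hc' | hc'
  · have hxy' : x = y' := eq_of_dist_eq_zero hc'.symm
    have e0 : l * dist x y' = 0 := by rw [← hc', mul_zero]
    rw [e0, hg.1, dist_comm _ x, seg_dist_from_start hf hmemf, hxy', dist_comm y' y]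
  · have h1 := comparison_norm hCN hg hc' (f (l * dist x y)) hl0 hl1
    have h2 := comparison_norm hCN hf hc y' hl0 hl1
    have hpx : dist (f (l * dist x y)) x = l * dist x y := by
      rw [dist_comm]; exact seg_dist_from_start hf hmemf
    have hpy' : dist y' (f (l * dist x y)) = dist (f (l * dist x y)) y' := dist_comm _ _
    have hy'x : dist y' x = dist x y' := dist_comm _ _
    have hy'y : dist y' y = dist y y' := dist_comm _ _
    rw [hpx] at h1
    rw [hpy', hy'x, hy'y] at h2
    apply le_of_sq_le_sq'' dist_nonneg (mul_nonneg hl0 dist_nonneg)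
    nlinarith [h1, mul_le_mul_of_nonneg_left h2 hl0]

lemma conv2 (hX : IsCAT0 X) {f g : ℝ → X} {x y x' y' : X}
    (hf : IsGeodesicSegment f x y) (hg : IsGeodesicSegment g x' y')
    {l : ℝ} (hl0 : 0 ≤ l) (hl1 : l ≤ 1) :
    dist (f (l * dist x y)) (g (l * dist x' y')) ≤ (1 - l) * dist x x' + l * dist y y' := by
  obtain ⟨h, hh⟩ := hX.1 x y'
  have hA := same_start hX.2 hf hh hl0 hl1
  have hhrev : IsGeodesicSegment (fun s => h (dist x y' - s)) y' x := seg_reverse hh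
  have hgrev : IsGeodesicSegment (fun s => g (dist x' y' - s)) y' x' := seg_reverse hg
  have hB := same_start hX.2 hhrev hgrev (by linarith : (0:ℝ) ≤ 1 - l) (by linarith)
  have e1 : dist x y' - (1 - l) * dist y' x = l * dist x y' := by
    rw [dist_comm y' x]; ring
  have e2 : dist x' y' - (1 - l) * dist y' x' = l * dist x' y' := by
    rw [dist_comm y' x']; ring
  rw [e1, e2] at hB
  calc dist (f (l * dist x y)) (g (l * dist x' y'))
      ≤ dist (f (l * dist x y)) (h (l * dist x y')) +
        dist (h (l * dist x y')) (g (l * dist x' y')) := dist_triangle _ _ _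
    _ ≤ l * dist y y' + (1 - l) * dist x x' := add_le_add hA hB
    _ = (1 - l) * dist x x' + l * dist y y' := by ring

lemma ray_conv (hX : IsCAT0 X) {h1 h2 : ℝ → X}
    (hr1 : IsGeodesicRay h1) (hr2 : IsGeodesicRay h2)
    {s T l : ℝ} (hs : 0 ≤ s) (hsT : s ≤ T) (hl0 : 0 ≤ l) (hl1 : l ≤ 1) :
    dist (h1 (s + l * (T - s))) (h2 (s + l * (T - s))) ≤
      (1 - l) * dist (h1 s) (h2 s) + l * dist (h1 T) (h2 T) := by
  have hseg1 := ray_restrict hr1 hs hsT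
  have hseg2 := ray_restrict hr2 hs hsT
  have hT : 0 ≤ T := hs.trans hsT
  have e1 : dist (h1 s) (h1 T) = T - s := by
    rw [hr1 s T hs hT, abs_sub_comm, abs_of_nonneg (by linarith)]
  have e2 : dist (h2 s) (h2 T) = T - s := by
    rw [hr2 s T hs hT, abs_sub_comm, abs_of_nonneg (by linarith)]
  have := conv2 hX hseg1 hseg2 hl0 hl1
  rw [e1, e2] at this
  simpa using this

end CATHelpers2
section RayExists

variable {X : Type*} [MetricSpace X]

set_option maxHeartbeats 2000000 in
lemma ray_exists [ProperSpace X] (hX : IsCAT0 X) {α : ℝ → X} (hα : IsGeodesicRay α) (x : X) :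
    ∃ c : ℝ → X, IsGeodesicRay c ∧ c 0 = x ∧
      ∀ t : ℝ, 0 ≤ t → dist (α t) (c t) ≤ dist x (α 0) := by
  classical
  have hd0 : (0:ℝ) ≤ dist x (α 0) := dist_nonneg
  have hex : ∀ n : ℕ, ∃ f : ℝ → X, IsGeodesicSegment f x (α n) := fun n => hX.1 x (α n)
  choose σ hσ using hex
  have hαn : ∀ n : ℕ, dist (α 0) (α n) = (n : ℝ) := by
    intro n
    rw [hα 0 n le_rfl (Nat.cast_nonneg n), zero_sub, abs_neg, abs_of_nonneg (Nat.cast_nonneg n)]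
  have hLn : ∀ n : ℕ, |dist x (α n) - (n : ℝ)| ≤ dist x (α 0) := by
    intro n
    have h1 := abs_dist_sub_le x (α 0) (α n)
    rw [hαn n] at h1
    exact h1
  -- the key Cauchy-type estimate
  have est : ∀ t : ℝ, 0 ≤ t → ∀ n m : ℕ, n ≤ m → 2 * dist x (α 0) + t + 2 ≤ (n : ℝ) →
      dist (σ n t) (σ m t) ^ 2 ≤
        t ^ 2 * (32 * dist x (α 0) + 96 * dist x (α 0) ^ 2) / n := by
    intro t ht n m hnm hn
    set d0 := dist x (α 0) with hd0def
    have hcast : (n : ℝ) ≤ (m : ℝ) := Nat.cast_le.mpr hnm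
    have hn1 : (1:ℝ) ≤ (n : ℝ) := by linarith
    have hnpos : (0:ℝ) < (n : ℝ) := by linarith
    have habs_n := hLn n
    have habs_m := hLn m
    rw [abs_le] at habs_n habs_m
    have hLn_low : (n : ℝ) - d0 ≤ dist x (α n) := by linarith [habs_n.1]
    have hLn_up : dist x (α n) ≤ (n : ℝ) + d0 := by linarith [habs_n.2]
    have hLm_low : (m : ℝ) - d0 ≤ dist x (α m) := by linarith [habs_m.1]
    have hLm_up : dist x (α m) ≤ (m : ℝ) + d0 := by linarith [habs_m.2]
    have he : dist (α n) (α m) = (m : ℝ) - n := by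
      rw [hα n m (Nat.cast_nonneg n) (Nat.cast_nonneg m),
        abs_of_nonpos (by linarith : (n : ℝ) - m ≤ 0)]
      ring
    have hdiff : |dist x (α m) - dist x (α n)| ≤ (m : ℝ) - n := by
      have h1 := abs_dist_sub_le (α m) (α n) x
      rw [dist_comm (α m) x, dist_comm (α n) x, dist_comm (α m) (α n)] at h1
      rw [he] at h1
      exact h1
    rw [abs_le] at hdiff
    set T := min (dist x (α n)) (dist x (α m)) with hTdef
    have hTn : T ≤ dist x (α n) := min_le_left _ _
    have hTm : T ≤ dist x (α m) := min_le_right _ _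
    have hTlow : (n : ℝ) - d0 ≤ T := le_min hLn_low (by linarith)
    have hTpos : 0 < T := by linarith
    have htT : t ≤ T := by linarith
    have hG : dist (σ n T) (σ m T) ^ 2 ≤ 8 * d0 * dist x (α n) + 16 * d0 ^ 2 := by
      rcases le_total (dist x (α n)) (dist x (α m)) with hle | hle
      · have hTeq : T = dist x (α n) := min_eq_left hle
        have hcmp := comparison_sq hX.2 (hσ m) (α n)
          (t := dist x (α n)) ⟨dist_nonneg, hle⟩
        rw [dist_comm (α n) x, he] at hcmp
        rw [hTeq, (hσ n).2.1]
        have hG0 : (0:ℝ) ≤ dist (α n) (σ m (dist x (α n))) := dist_nonneg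
        have hb_pos : 0 < dist x (α m) := by linarith
        have hstep2 : dist (α n) (σ m (dist x (α n))) ^ 2 * dist x (α m) ≤
            dist x (α n) * (((m : ℝ) - n) ^ 2 - (dist x (α m) - dist x (α n)) ^ 2) := by
          linarith [hcmp]
        have hstep1 : ((m : ℝ) - n) ^ 2 - (dist x (α m) - dist x (α n)) ^ 2 ≤
            8 * d0 * dist x (α m) := by
          have hED : ((m : ℝ) - n) - (dist x (α m) - dist x (α n)) ≤ 2 * d0 := by linarith
          have hD0 : 0 ≤ dist x (α m) - dist x (α n) := by linarith
          have he0 : (0:ℝ) ≤ (m : ℝ) - n := by linarith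
          have hsum : ((m : ℝ) - n) + (dist x (α m) - dist x (α n)) ≤ 4 * dist x (α m) := by
            linarith
          rcases le_or_gt (((m : ℝ) - n) - (dist x (α m) - dist x (α n))) 0 with hneg | hpos
          · have h10 := mul_nonneg (neg_nonneg.mpr hneg)
              (show (0:ℝ) ≤ ((m : ℝ) - n) + (dist x (α m) - dist x (α n)) by linarith)
            have h11 := mul_nonneg hd0 hb_pos.le
            nlinarith [h10, h11]
          · have h8 := mul_le_mul hED hsum (by linarith) (by linarith)
            nlinarith [h8]
        have hstep3 : dist x (α n) * (((m : ℝ) - n) ^ 2 - (dist x (α m) - dist x (α n)) ^ 2) ≤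
            dist x (α n) * (8 * d0 * dist x (α m)) :=
          mul_le_mul_of_nonneg_left hstep1 dist_nonneg
        have hfin : dist (α n) (σ m (dist x (α n))) ^ 2 * dist x (α m) ≤
            (8 * d0 * dist x (α n)) * dist x (α m) := by linarith [hstep2, hstep3]
        have hfin2 := le_of_mul_le_mul_right hfin hb_pos
        linarith [hfin2, sq_nonneg d0]
      · have hTeq : T = dist x (α m) := min_eq_right hle
        have h1 : dist (σ n (dist x (α m))) (α n) = dist x (α n) - dist x (α m) := by
          have h2 := (hσ n).2.2 (dist x (α m)) (dist x (α n))
            ⟨dist_nonneg, hle⟩ ⟨dist_nonneg, le_refl _⟩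
          rw [(hσ n).2.1] at h2
          rw [h2, abs_of_nonpos (by linarith)]
          ring
        have hbound : dist (σ n T) (σ m T) ≤ 4 * d0 := by
          rw [hTeq, (hσ m).2.1]
          calc dist (σ n (dist x (α m))) (α m)
              ≤ dist (σ n (dist x (α m))) (α n) + dist (α n) (α m) := dist_triangle _ _ _
            _ ≤ 4 * d0 := by rw [h1, he]; linarith
        have h9 : dist (σ n T) (σ m T) ^ 2 ≤ (4 * d0) ^ 2 :=
          pow_le_pow_left₀ dist_nonneg hbound 2
        have h11 := mul_nonneg hd0 (dist_nonneg (x := x) (y := α n))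
        nlinarith [h9, h11]
    have hmemT_n : T ∈ Set.Icc (0:ℝ) (dist x (α n)) := ⟨hTpos.le, hTn⟩
    have hmemT_m : T ∈ Set.Icc (0:ℝ) (dist x (α m)) := ⟨hTpos.le, hTm⟩
    have hseg1 : IsGeodesicSegment (σ n) x (σ n T) := seg_trunc (hσ n) hmemT_n
    have hseg2 : IsGeodesicSegment (σ m) x (σ m T) := seg_trunc (hσ m) hmemT_m
    have e1 : dist x (σ n T) = T := seg_dist_from_start (hσ n) hmemT_n
    have e2 : dist x (σ m T) = T := seg_dist_from_start (hσ m) hmemT_m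
    have hl0 : 0 ≤ t / T := div_nonneg ht hTpos.le
    have hl1 : t / T ≤ 1 := (div_le_one hTpos).mpr htT
    have hss := same_start hX.2 hseg1 hseg2 hl0 hl1
    rw [e1, e2, div_mul_cancel₀ t (ne_of_gt hTpos)] at hss
    have hsq : dist (σ n t) (σ m t) ^ 2 ≤ (t / T) ^ 2 * dist (σ n T) (σ m T) ^ 2 := by
      have h := pow_le_pow_left₀ dist_nonneg hss 2
      rw [mul_pow] at h
      exact h
    have hnd0pos : (0:ℝ) < (n : ℝ) - d0 := by linarith
    have hTn2 : ((n : ℝ) - d0) ^ 2 ≤ T ^ 2 := pow_le_pow_left₀ hnd0pos.le hTlow 2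
    have hstep : (t / T) ^ 2 ≤ t ^ 2 / ((n : ℝ) - d0) ^ 2 := by
      rw [div_pow, div_le_div_iff₀ (pow_pos hTpos 2) (pow_pos hnd0pos 2)]
      nlinarith [hTn2, sq_nonneg t]
    have hfinal : dist (σ n t) (σ m t) ^ 2 ≤
        (t ^ 2 / ((n : ℝ) - d0) ^ 2) * (8 * d0 * ((n : ℝ) + d0) + 16 * d0 ^ 2) := by
      have hq0 : (0:ℝ) ≤ 8 * d0 * dist x (α n) + 16 * d0 ^ 2 := by
        nlinarith [mul_nonneg hd0 (dist_nonneg (x := x) (y := α n)), sq_nonneg d0]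
      have h1 : (t / T) ^ 2 * dist (σ n T) (σ m T) ^ 2 ≤
          (t / T) ^ 2 * (8 * d0 * dist x (α n) + 16 * d0 ^ 2) :=
        mul_le_mul_of_nonneg_left hG (by positivity)
      have h2 : (t / T) ^ 2 * (8 * d0 * dist x (α n) + 16 * d0 ^ 2) ≤
          (t ^ 2 / ((n : ℝ) - d0) ^ 2) * (8 * d0 * ((n : ℝ) + d0) + 16 * d0 ^ 2) := by
        apply mul_le_mul hstep (by nlinarith) hq0 (by positivity)
      linarith
    have hlast : (t ^ 2 / ((n : ℝ) - d0) ^ 2) * (8 * d0 * ((n : ℝ) + d0) + 16 * d0 ^ 2) ≤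
        t ^ 2 * (32 * d0 + 96 * d0 ^ 2) / n := by
      rw [div_mul_eq_mul_div, div_le_div_iff₀ (pow_pos hnd0pos 2) hnpos]
      have hhalf : (n : ℝ) / 2 ≤ (n : ℝ) - d0 := by linarith
      have hsq2 : ((n : ℝ) / 2) ^ 2 ≤ ((n : ℝ) - d0) ^ 2 :=
        pow_le_pow_left₀ (by positivity) hhalf 2
      have e3 : (n : ℝ) ≤ (n : ℝ) ^ 2 := by nlinarith
      have e1' : (0:ℝ) ≤ t ^ 2 * (32 * d0 + 96 * d0 ^ 2) := by
        apply mul_nonneg (sq_nonneg t)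
        nlinarith [sq_nonneg d0]
      have e2' := mul_le_mul_of_nonneg_left hsq2 e1'
      nlinarith [e2', mul_nonneg (mul_nonneg (sq_nonneg t) (sq_nonneg d0))
        (by nlinarith : (0:ℝ) ≤ (n : ℝ) ^ 2 - n)]
    linarith
  -- Cauchy sequences and limits
  have hcauchy : ∀ t' : ℝ, 0 ≤ t' → CauchySeq (fun n : ℕ => σ n t') := by
    intro t' ht'
    rw [Metric.cauchySeq_iff']
    intro ε hε
    set K := t' ^ 2 * (32 * dist x (α 0) + 96 * dist x (α 0) ^ 2) with hKdef
    obtain ⟨N, hN⟩ := exists_nat_ge (max (2 * dist x (α 0) + t' + 2) (K / ε ^ 2 + 1))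
    refine ⟨N, fun n hn => ?_⟩
    have h1 : 2 * dist x (α 0) + t' + 2 ≤ (N : ℝ) := le_trans (le_max_left _ _) hN
    have h2 : K / ε ^ 2 + 1 ≤ (N : ℝ) := le_trans (le_max_right _ _) hN
    have hest := est t' ht' N n hn h1
    have hNpos : (0:ℝ) < (N : ℝ) := by linarith
    have h3 : K ≤ ((N : ℝ) - 1) * ε ^ 2 :=
      (div_le_iff₀ (pow_pos hε 2)).mp (by linarith)
    have hKn : K / (N : ℝ) < ε ^ 2 := by
      rw [div_lt_iff₀ hNpos]
      nlinarith [pow_pos hε 2]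
    have hd : dist (σ N t') (σ n t') ^ 2 < ε ^ 2 := lt_of_le_of_lt hest hKn
    rw [dist_comm]
    nlinarith [dist_nonneg (x := σ N t') (y := σ n t'), hε]
  have hlim : ∀ t : ℝ, ∃ p : X, Filter.Tendsto (fun n : ℕ => σ n (max t 0))
      Filter.atTop (nhds p) :=
    fun t => cauchySeq_tendsto_of_complete (hcauchy (max t 0) (le_max_right _ _))
  choose c hc using hlim
  refine ⟨c, ?_, ?_, ?_⟩
  · -- geodesic ray
    intro s t hs ht
    have htend := (hc s).dist (hc t)
    simp only [max_eq_left hs, max_eq_left ht] at htend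
    have hev : ∀ᶠ n : ℕ in Filter.atTop, dist (σ n s) (σ n t) = |s - t| := by
      obtain ⟨N, hN⟩ := exists_nat_ge (max s t + dist x (α 0) + 1)
      filter_upwards [Filter.eventually_ge_atTop N] with n hn
      have hcast : (N : ℝ) ≤ (n : ℝ) := Nat.cast_le.mpr hn
      have habs := hLn n
      rw [abs_le] at habs
      have hst : max s t ≤ dist x (α n) := by
        have := le_max_left s t
        linarith [habs.1]
      exact (hσ n).2.2 s t ⟨hs, le_trans (le_max_left s t) hst⟩
        ⟨ht, le_trans (le_max_right s t) hst⟩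
    exact tendsto_nhds_unique htend
      (Filter.Tendsto.congr' (hev.mono fun _ h => h.symm) tendsto_const_nhds)
  · -- c 0 = x
    have h := hc 0
    have heq : (fun n : ℕ => σ n (max (0:ℝ) 0)) = fun _ : ℕ => x := by
      funext n
      simp [(hσ n).1]
    rw [heq] at h
    exact tendsto_nhds_unique h tendsto_const_nhds
  · -- asymptotic
    intro t ht
    have htend : Filter.Tendsto (fun n : ℕ => dist (α t) (σ n (max t 0)))
        Filter.atTop (nhds (dist (α t) (c t))) := tendsto_const_nhds.dist (hc t)
    simp only [max_eq_left ht] at htend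
    refine le_of_tendsto htend ?_
    obtain ⟨N, hN⟩ := exists_nat_ge (t + dist x (α 0) + 1)
    filter_upwards [Filter.eventually_ge_atTop N] with n hn
    have hcast : (N : ℝ) ≤ (n : ℝ) := Nat.cast_le.mpr hn
    have hncast : t + dist x (α 0) + 1 ≤ (n : ℝ) := by linarith
    have hnpos : (0:ℝ) < (n : ℝ) := by linarith [hd0, ht]
    have habs := hLn n
    rw [abs_le] at habs
    have hLt : t ≤ dist x (α n) := by linarith [habs.1]
    have hl0 : 0 ≤ t / (n : ℝ) := div_nonneg ht hnpos.le
    have hl1 : t / (n : ℝ) ≤ 1 := (div_le_one hnpos).mpr (by linarith)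
    have hconv := conv2 hX (hσ n) (ray_seg hα (Nat.cast_nonneg n)) hl0 hl1
    rw [hαn n, div_mul_cancel₀ t (ne_of_gt hnpos)] at hconv
    simp only [dist_self, mul_zero, add_zero] at hconv
    -- hconv : dist (σ n (t/n * dist x (α n))) (α t) ≤ (1 - t/n) * dist x (α 0)
    have harg : t / (n : ℝ) * dist x (α n) ∈ Set.Icc (0:ℝ) (dist x (α n)) :=
      ⟨mul_nonneg hl0 dist_nonneg, mul_le_of_le_one_left dist_nonneg hl1⟩
    have hmid : dist (σ n (t / (n : ℝ) * dist x (α n))) (σ n t) =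
        |t / (n : ℝ) * dist x (α n) - t| := (hσ n).2.2 _ _ harg ⟨ht, hLt⟩
    have habs2 : |t / (n : ℝ) * dist x (α n) - t| ≤ t * dist x (α 0) / n := by
      have heq2 : t / (n : ℝ) * dist x (α n) - t = (t / n) * (dist x (α n) - n) := by
        field_simp
      rw [heq2, abs_mul, abs_of_nonneg hl0]
      calc t / (n : ℝ) * |dist x (α n) - (n : ℝ)| ≤ t / n * dist x (α 0) :=
            mul_le_mul_of_nonneg_left (hLn n) hl0
        _ = t * dist x (α 0) / n := by ring
    calc dist (α t) (σ n t)
        ≤ dist (α t) (σ n (t / (n : ℝ) * dist x (α n))) +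
          dist (σ n (t / (n : ℝ) * dist x (α n))) (σ n t) := dist_triangle _ _ _
      _ ≤ (1 - t / n) * dist x (α 0) + t * dist x (α 0) / n := by
          refine add_le_add ?_ (by rw [hmid]; exact habs2)
          rw [dist_comm]
          exact hconv
      _ ≤ dist x (α 0) := by
          have : (1 - t / (n : ℝ)) * dist x (α 0) + t * dist x (α 0) / n = dist x (α 0) := by
            field_simp
            ring
          linarith [this.le]

end RayExists
open Pointwise in
/-- Ruane: For a proper CAT(0) space with a geometric group action and a
hyperbolic isometry `γ` from the group, `∂Min(γ)` equals the fixed-point set of `γ` on `∂X`. -/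
theorem stmt_9 (X : Type*) [MetricSpace X] [ProperSpace X] (hX : IsCAT0 X)
    (G : Type*) [Group G] [MulAction G X]
    (hiso : ∀ g : G, Isometry (fun x : X => g • x))
    (hproper : ∀ K : Set X, IsCompact K → {g : G | ((g • K) ∩ K).Nonempty}.Finite)
    (hcocpt : ∃ K : Set X, IsCompact K ∧ ∀ x : X, ∃ g : G, g • x ∈ K)
    (g₀ : G) (γ : X ≃ᵢ X) (hγg : ∀ x : X, γ x = g₀ • x)
    (hγ : IsHyperbolicIsometry γ) (x₀ : X) :
    bdryOf x₀ (minSet γ) = {α : Boundary X x₀ | Asymptotic (⇑γ ∘ α.1) α.1} := by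
  obtain ⟨⟨x, hx⟩, hpos⟩ := hγ
  have hx' : dist x (γ x) = translationLength γ := hx
  have hbdd : BddBelow (Set.range fun w : X => dist w (γ w)) :=
    ⟨0, by rintro _ ⟨w, rfl⟩; exact dist_nonneg⟩
  have hlower : ∀ w : X, translationLength γ ≤ dist w (γ w) := fun w => ciInf_le hbdd w
  ext α
  simp only [bdryOf, Set.mem_setOf_eq]
  constructor
  · rintro ⟨g, hgray, hgsub, C, hC⟩
    refine ⟨2 * C + translationLength γ, fun t ht => ?_⟩
    have hgt : g t ∈ minSet γ := hgsub ⟨t, ht, rfl⟩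
    have hgt' : dist (g t) (γ (g t)) = translationLength γ := hgt
    have h1 : dist (γ (α.1 t)) (γ (g t)) = dist (α.1 t) (g t) := γ.dist_eq _ _
    have h2 : dist ((⇑γ ∘ α.1) t) (α.1 t) = dist (γ (α.1 t)) (α.1 t) := rfl
    rw [h2]
    calc dist (γ (α.1 t)) (α.1 t)
        ≤ dist (γ (α.1 t)) (γ (g t)) + dist (γ (g t)) (g t) + dist (g t) (α.1 t) :=
          dist_triangle4 _ _ _ _
      _ ≤ 2 * C + translationLength γ := by
          rw [h1, dist_comm (γ (g t)) (g t), hgt', dist_comm (g t) (α.1 t)]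
          linarith [hC t ht]
  · rintro ⟨C, hC⟩
    obtain ⟨c, hcray, hc0, hcas⟩ := ray_exists hX α.2.1 x
    refine ⟨c, hcray, ?_, ⟨dist x (α.1 0), fun t ht => hcas t ht⟩⟩
    rintro _ ⟨t, ht, rfl⟩
    have ht' : (0:ℝ) ≤ t := ht
    have hγray : IsGeodesicRay (⇑γ ∘ c) := by
      intro s u hs hu
      show dist (γ (c s)) (γ (c u)) = |s - u|
      rw [γ.dist_eq]
      exact hcray s u hs hu
    have hB : ∀ T : ℝ, 0 ≤ T → dist (c T) (γ (c T)) ≤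
        dist x (α.1 0) + C + dist x (α.1 0) := by
      intro T hT
      calc dist (c T) (γ (c T))
          ≤ dist (c T) (α.1 T) + dist (α.1 T) (γ (α.1 T)) + dist (γ (α.1 T)) (γ (c T)) :=
            dist_triangle4 _ _ _ _
        _ ≤ dist x (α.1 0) + C + dist x (α.1 0) := by
            have e1 : dist (c T) (α.1 T) ≤ dist x (α.1 0) := by
              rw [dist_comm]; exact hcas T hT
            have e2 : dist (α.1 T) (γ (α.1 T)) ≤ C := by
              rw [dist_comm]; exact hC T hT
            have e3 : dist (γ (α.1 T)) (γ (c T)) ≤ dist x (α.1 0) := by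
              rw [γ.dist_eq]; exact hcas T hT
            linarith
    have hmono : dist (c t) (γ (c t)) ≤ dist (c 0) (γ (c 0)) := by
      have hdiv : Filter.Tendsto (fun T : ℝ => t / T) Filter.atTop (nhds 0) :=
        Filter.Tendsto.div_atTop tendsto_const_nhds Filter.tendsto_id
      have htendl : Filter.Tendsto (fun T : ℝ =>
          (1 - t / T) * dist (c 0) (γ (c 0)) +
            (t / T) * (dist x (α.1 0) + C + dist x (α.1 0)))
          Filter.atTop (nhds (dist (c 0) (γ (c 0)))) := by
        have hA : Filter.Tendsto (fun T : ℝ => 1 - t / T) Filter.atTop (nhds (1 - 0)) :=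
          tendsto_const_nhds.sub hdiv
        have hA' := hA.mul_const (dist (c 0) (γ (c 0)))
        have hB2 := hdiv.mul_const (dist x (α.1 0) + C + dist x (α.1 0))
        have h := hA'.add hB2
        simpa using h
      refine ge_of_tendsto htendl ?_
      filter_upwards [Filter.eventually_ge_atTop (max t 1)] with T hT
      have hT1 : (1:ℝ) ≤ T := le_trans (le_max_right _ _) hT
      have hTt : t ≤ T := le_trans (le_max_left _ _) hT
      have hTpos : (0:ℝ) < T := lt_of_lt_of_le one_pos hT1
      have hl0 : 0 ≤ t / T := div_nonneg ht' hTpos.le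
      have hl1 : t / T ≤ 1 := (div_le_one hTpos).mpr hTt
      have hconv := ray_conv hX hcray hγray (s := 0) (T := T) le_rfl hTpos.le hl0 hl1
      rw [show (0:ℝ) + t / T * (T - 0) = t / T * T by ring,
        div_mul_cancel₀ t (ne_of_gt hTpos)] at hconv
      have hgcomp : ∀ u : ℝ, (⇑γ ∘ c) u = γ (c u) := fun _ => rfl
      rw [hgcomp, hgcomp, hgcomp] at hconv
      calc dist (c t) (γ (c t))
          ≤ (1 - t / T) * dist (c 0) (γ (c 0)) + (t / T) * dist (c T) (γ (c T)) := hconv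
        _ ≤ (1 - t / T) * dist (c 0) (γ (c 0)) +
              (t / T) * (dist x (α.1 0) + C + dist x (α.1 0)) := by
            have := hB T hTpos.le
            have h4 := mul_le_mul_of_nonneg_left this hl0
            linarith
    have hc00 : dist (c 0) (γ (c 0)) = translationLength γ := by
      rw [hc0]; exact hx'
    show dist (c t) (γ (c t)) = translationLength γ
    exact le_antisymm (by rw [← hc00]; exact hmono) (hlower (c t))
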